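/- Let λ₁ > λ₂ ≥ … ≥ λ_d > 0, let V⁰ be a unit vector with (V₁⁰)² = δ ∈ (0, 1/2), and let V(t) be the generalized logistic curve V_k(t) = Z(t)^(-1/2) V_k⁰ e^{λ_k t}. If T satisfies V₁(T)² = 1 - δ, then (λ₁-λ_d)^(-1) log((1-δ)/δ) ≤ T ≤ (λ₁-λ₂)^(-1) log((1-δ)/δ). -/

import Mathlib

/-!
Write `Z(T) = δ e^{2λ₁T} + S` with `S = ∑_{i ≥ 2} (Vᵢ⁰)² e^{2λᵢT}`. The crossing condition
`δ e^{2λ₁T} = (1 - δ) Z(T)` becomes `δ² e^{2λ₁T} = (1 - δ) S`. Since the weights `(Vᵢ⁰)²`, `i ≥ 2`,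
sum to `1 - δ`, for `T ≥ 0` the sum `S` lies between `(1 - δ) e^{2λ_d T}` and `(1 - δ) e^{2λ₂T}`;
taking logarithms gives the two bounds.
-/

open Real Finset

lemma sq_inv_sqrt_mul {z : ℝ} (hz : 0 ≤ z) (x : ℝ) : ((√z)⁻¹ * x) ^ 2 = x ^ 2 / z := by
  rw [mul_pow, inv_pow, sq_sqrt hz, inv_mul_eq_div]

lemma sq_mul_exp (c x : ℝ) : (c * exp x) ^ 2 = c ^ 2 * exp (2 * x) := by
  rw [mul_pow, ← exp_nat_mul]; norm_num

lemma sum_mul_le_sum_mul_const {ι : Type*} (s : Finset ι) {w f : ι → ℝ} {b : ℝ}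
    (hw : ∀ i ∈ s, 0 ≤ w i) (hf : ∀ i ∈ s, f i ≤ b) :
    ∑ i ∈ s, w i * f i ≤ (∑ i ∈ s, w i) * b := by
  rw [sum_mul]
  exact sum_le_sum fun i hi => mul_le_mul_of_nonneg_left (hf i hi) (hw i hi)

lemma sum_mul_const_le_sum_mul {ι : Type*} (s : Finset ι) {w f : ι → ℝ} {a : ℝ}
    (hw : ∀ i ∈ s, 0 ≤ w i) (hf : ∀ i ∈ s, a ≤ f i) :
    (∑ i ∈ s, w i) * a ≤ ∑ i ∈ s, w i * f i := by
  rw [sum_mul]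
  exact sum_le_sum fun i hi => mul_le_mul_of_nonneg_left (hf i hi) (hw i hi)

lemma sq_mul_exp_le_sq_mul_exp_iff {p q a b T : ℝ} (hp : 0 < p) (hq : 0 < q) :
    p ^ 2 * exp (2 * a * T) ≤ q ^ 2 * exp (2 * b * T) ↔ (a - b) * T ≤ log q - log p := by
  rw [← log_le_log_iff (by positivity) (by positivity), log_mul (by positivity) (exp_ne_zero _),
    log_mul (by positivity) (exp_ne_zero _), log_exp, log_exp, log_pow, log_pow]
  constructor <;> intro h <;> push_cast at * <;> linarith

lemma le_inv_mul_log_of_sq_mul_exp_le {p q a b T : ℝ} (hp : 0 < p) (hq : 0 < q) (hba : b < a)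
    (h : p ^ 2 * exp (2 * a * T) ≤ q ^ 2 * exp (2 * b * T)) : T ≤ (a - b)⁻¹ * log (q / p) := by
  rw [le_inv_mul_iff₀ (sub_pos.2 hba), log_div hq.ne' hp.ne']
  exact (sq_mul_exp_le_sq_mul_exp_iff hp hq).1 h

lemma inv_mul_log_le_of_sq_mul_exp_le {p q a b T : ℝ} (hp : 0 < p) (hq : 0 < q) (hba : b < a)
    (h : q ^ 2 * exp (2 * b * T) ≤ p ^ 2 * exp (2 * a * T)) : (a - b)⁻¹ * log (q / p) ≤ T := by
  rw [inv_mul_le_iff₀ (sub_pos.2 hba), log_div hq.ne' hp.ne']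
  linarith [(sq_mul_exp_le_sq_mul_exp_iff hq hp).1 h]

lemma sum_mul_exp_mem_Icc {n : ℕ} {L : Fin (n + 1) → ℝ} (hL : Antitone L) {w : Fin (n + 1) → ℝ}
    (hw : ∀ i, 0 ≤ w i) {T : ℝ} (hT : 0 ≤ T) :
    (∑ i, w i) * exp (2 * L (Fin.last n) * T) ≤ ∑ i, w i * exp (2 * L i * T) ∧
      ∑ i, w i * exp (2 * L i * T) ≤ (∑ i, w i) * exp (2 * L 0 * T) := by
  have hexp {i j : Fin (n + 1)} (hij : i ≤ j) : exp (2 * L j * T) ≤ exp (2 * L i * T) :=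
    exp_le_exp.2 <| mul_le_mul_of_nonneg_right (by linarith [hL hij]) hT
  exact ⟨sum_mul_const_le_sum_mul _ (fun i _ => hw i) fun i _ => hexp (Fin.le_last i),
    sum_mul_le_sum_mul_const _ (fun i _ => hw i) fun i _ => hexp (Fin.zero_le i)⟩

lemma sq_mul_exp_eq_of_logistic_sq_eq {n : ℕ} {L V0 : Fin (n + 1) → ℝ} {δ T : ℝ}
    (hδ1 : δ ≠ 1) (hinit : V0 0 ^ 2 = δ)
    (hT : ((√(∑ i, V0 i ^ 2 * exp (2 * L i * T)))⁻¹ * (V0 0 * exp (L 0 * T))) ^ 2 = 1 - δ) :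
    δ ^ 2 * exp (2 * L 0 * T) = (1 - δ) * ∑ i : Fin n, V0 i.succ ^ 2 * exp (2 * L i.succ * T) := by
  rw [sq_inv_sqrt_mul (by positivity), sq_mul_exp, hinit, ← mul_assoc,
    div_eq_iff fun hZ => by simp [hZ] at hT; exact hδ1 (by linarith)] at hT
  rw [Fin.sum_univ_succ, hinit] at hT
  linear_combination hT

theorem oja_phase2_crossing_time_general
    (d : ℕ) (L : Fin (d + 2) → ℝ)
    (hanti : Antitone L) (hgap : L 1 < L 0)
    (V0 : Fin (d + 2) → ℝ) (hunit : ∑ i, (V0 i) ^ 2 = 1)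
    (δ : ℝ) (hδ0 : 0 < δ) (hδ1 : δ < 1 / 2) (hinit : (V0 0) ^ 2 = δ)
    (V : Fin (d + 2) → ℝ → ℝ)
    (hV : ∀ k t, V k t =
      (Real.sqrt (∑ i, (V0 i) ^ 2 * Real.exp (2 * L i * t)))⁻¹ *
        (V0 k * Real.exp (L k * t)))
    (T : ℝ) (hT : (V 0 T) ^ 2 = 1 - δ) :
    (L 0 - L (Fin.last (d + 1)))⁻¹ * Real.log ((1 - δ) / δ) ≤ T ∧
      T ≤ (L 0 - L 1)⁻¹ * Real.log ((1 - δ) / δ) := by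
  have hδ : 0 < 1 - δ := by linarith
  have hcross := sq_mul_exp_eq_of_logistic_sq_eq (by linarith) hinit (hV 0 T ▸ hT)
  set S := ∑ i : Fin (d + 1), V0 i.succ ^ 2 * exp (2 * L i.succ * T)
  have hmass : ∑ i : Fin (d + 1), V0 i.succ ^ 2 = 1 - δ := by
    rw [Fin.sum_univ_succ, hinit] at hunit; linarith
  -- the mass `1 - δ > δ` outside the first coordinate is only overtaken if `T > 0`
  have hT0 : 0 ≤ T := by
    by_contra! hT0
    have : (1 - δ) * exp (2 * L 0 * T) ≤ S :=
      hmass ▸ sum_mul_const_le_sum_mul univ (fun i _ => sq_nonneg _) fun i _ =>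
        exp_le_exp.2 <| mul_le_mul_of_nonpos_right
            (show 2 * L i.succ ≤ 2 * L 0 by linarith [hanti (Fin.zero_le i.succ)]) hT0.le
    nlinarith [exp_pos (2 * L 0 * T)]
  obtain ⟨hS_ge, hS_le⟩ := sum_mul_exp_mem_Icc (hanti.comp_monotone Fin.strictMono_succ.monotone)
    (fun i => sq_nonneg (V0 i.succ)) hT0
  rw [hmass] at hS_ge hS_le
  have hlast : L (Fin.last (d + 1)) < L 0 := (hanti (Fin.le_last 1)).trans_lt hgap
  constructor
  · refine inv_mul_log_le_of_sq_mul_exp_le hδ0 hδ hlast ?_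
    rw [hcross, sq, mul_assoc]; exact mul_le_mul_of_nonneg_left hS_ge hδ.le
  · refine le_inv_mul_log_of_sq_mul_exp_le hδ0 hδ hgap ?_
    rw [hcross, sq, mul_assoc]; exact mul_le_mul_of_nonneg_left hS_le hδ.le

/-- Bounds on the Phase II crossing time of the generalized logistic curve. -/
theorem oja_phase2_crossing_time
    (d : ℕ) (L : Fin (d + 2) → ℝ)
    (hanti : Antitone L) (hgap : L 1 < L 0) (hpos : 0 < L (Fin.last (d + 1)))
    (V0 : Fin (d + 2) → ℝ) (hunit : ∑ i, (V0 i) ^ 2 = 1)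
    (δ : ℝ) (hδ0 : 0 < δ) (hδ1 : δ < 1 / 2) (hinit : (V0 0) ^ 2 = δ)
    (V : Fin (d + 2) → ℝ → ℝ)
    (hV : ∀ k t, V k t =
      (Real.sqrt (∑ i, (V0 i) ^ 2 * Real.exp (2 * L i * t)))⁻¹ *
        (V0 k * Real.exp (L k * t)))
    (T : ℝ) (hT : (V 0 T) ^ 2 = 1 - δ) :
    (L 0 - L (Fin.last (d + 1)))⁻¹ * Real.log ((1 - δ) / δ) ≤ T ∧
      T ≤ (L 0 - L 1)⁻¹ * Real.log ((1 - δ) / δ) :=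
  oja_phase2_crossing_time_general d L hanti hgap V0 hunit δ hδ0 hδ1 hinit V hV T hT
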